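/- If the potential outcome Y_a is conditionally independent of the data-source indicator R given the full covariates (X, W), then E[Y_a | R = false] = Σ_{(x,w)} ℙ(X = x, W = w | R = false) · E[Y_a | X = x, W = w, R = true], where the sum runs over all (x, w) with ℙ(X = x, W = w, R = false) > 0. -/

import Mathlib

open Finset

attribute [local instance] Classical.propDecidable

variable {Ω : Type*}

/-- Probability of an event. -/
noncomputable def pr [Fintype Ω] (P : Ω → ℝ) (E : Ω → Prop) : ℝ :=
  ∑ ω, if E ω then P ω else 0

/-- Expectation of a real random variable. -/
noncomputable def ex [Fintype Ω] (P : Ω → ℝ) (Z : Ω → ℝ) : ℝ :=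
  ∑ ω, P ω * Z ω

/-- Conditional probability ℙ(F | E) = ℙ(F ∩ E)/ℙ(E). -/
noncomputable def cpr [Fintype Ω] (P : Ω → ℝ) (F E : Ω → Prop) : ℝ :=
  pr P (fun ω => F ω ∧ E ω) / pr P E

/-- Conditional expectation E[Z | E] = E[Z·1_E]/ℙ(E). -/
noncomputable def cex [Fintype Ω] (P : Ω → ℝ) (Z : Ω → ℝ) (E : Ω → Prop) : ℝ :=
  (∑ ω, if E ω then P ω * Z ω else 0) / pr P E

/-! Within a stratum `S = {X = x, W = w}` of positive probability, conditional independence makes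
the mean of `Y_a` on `S ∩ {R = r}` equal to its mean on `S`, whatever the source `r`. Hence the
target-population mean of `Y_a` on each stratum equals the trial mean there, and the law of total
expectation over the strata gives the standardization formula. -/

noncomputable def exIndicator [Fintype Ω] (P : Ω → ℝ) (Z : Ω → ℝ) (E : Ω → Prop) : ℝ :=
  ∑ ω, if E ω then P ω * Z ω else 0

section

variable [Fintype Ω] (P : Ω → ℝ)

lemma pr_congr {E F : Ω → Prop} (h : ∀ ω, E ω ↔ F ω) : pr P E = pr P F := by
  simp only [pr, h]

lemma pr_nonneg (hP0 : ∀ ω, 0 ≤ P ω) (E : Ω → Prop) : 0 ≤ pr P E :=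
  sum_nonneg fun ω _ => by split <;> simp [hP0 ω]

lemma pr_mono (hP0 : ∀ ω, 0 ≤ P ω) {E F : Ω → Prop} (h : ∀ ω, E ω → F ω) :
    pr P E ≤ pr P F :=
  sum_le_sum fun ω _ => by
    split_ifs with hE hF
    exacts [le_rfl, absurd (h ω hE) hF, hP0 ω, le_rfl]

lemma cex_eq_exIndicator_div (Z : Ω → ℝ) (E : Ω → Prop) :
    cex P Z E = exIndicator P Z E / pr P E :=
  rfl

lemma exIndicator_eq_pr_mul_cex (Z : Ω → ℝ) {E : Ω → Prop} (hE : pr P E ≠ 0) :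
    exIndicator P Z E = pr P E * cex P Z E := by
  rw [cex_eq_exIndicator_div, mul_div_cancel₀ _ hE]

lemma exIndicator_eq_zero_of_pr_eq_zero (hP0 : ∀ ω, 0 ≤ P ω) (Z : Ω → ℝ) {E : Ω → Prop}
    (hE : pr P E = 0) : exIndicator P Z E = 0 := by
  have hnull : ∀ ω, E ω → P ω = 0 := fun ω hω => by
    simpa [hω] using (sum_eq_zero_iff_of_nonneg fun ω _ => by split <;> simp [hP0 ω]).1 hE ω
      (mem_univ ω)
  exact sum_eq_zero fun ω _ => by split_ifs with hω <;> simp [*]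

lemma exIndicator_eq_sum_fiberwise {κ : Type*} {t : Finset κ} (f : Ω → κ) (hf : ∀ ω, f ω ∈ t)
    (Z : Ω → ℝ) (E : Ω → Prop) :
    exIndicator P Z E = ∑ k ∈ t, exIndicator P Z (fun ω => f ω = k ∧ E ω) := by
  simp only [exIndicator]
  rw [sum_comm]
  refine sum_congr rfl fun ω _ => ?_
  by_cases hE : E ω <;> simp [hE, hf ω]

lemma exIndicator_of_eq_const (Z : Ω → ℝ) (E : Ω → Prop) (y : ℝ) :
    exIndicator P Z (fun ω => Z ω = y ∧ E ω) = y * pr P (fun ω => Z ω = y ∧ E ω) := by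
  rw [exIndicator, pr, mul_sum]
  refine sum_congr rfl fun ω _ => ?_
  split_ifs with h
  · rw [h.1, mul_comm]
  · rw [mul_zero]

lemma exIndicator_eq_sum_values (Z : Ω → ℝ) (E : Ω → Prop) :
    exIndicator P Z E = ∑ y ∈ univ.image Z, y * pr P (fun ω => Z ω = y ∧ E ω) := by
  rw [exIndicator_eq_sum_fiberwise P Z (fun ω => mem_image_of_mem Z (mem_univ ω))]
  exact sum_congr rfl fun y _ => exIndicator_of_eq_const P Z E y

lemma cex_inter_eq_of_condIndep (Z : Ω → ℝ) {S B : Ω → Prop}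
    (hCI : ∀ y, cpr P (fun ω => Z ω = y ∧ B ω) S = cpr P (fun ω => Z ω = y) S * cpr P B S)
    (hS : pr P S ≠ 0) (hSB : pr P (fun ω => S ω ∧ B ω) ≠ 0) :
    cex P Z (fun ω => S ω ∧ B ω) = cex P Z S := by
  have hfactor : ∀ y, pr P (fun ω => Z ω = y ∧ S ω ∧ B ω)
      = pr P (fun ω => Z ω = y ∧ S ω) * (pr P (fun ω => S ω ∧ B ω) / pr P S) := by
    intro y
    have h := hCI y
    rw [cpr, cpr, cpr, pr_congr P (F := fun ω => Z ω = y ∧ S ω ∧ B ω) fun ω => by tauto,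
      pr_congr P (E := fun ω => B ω ∧ S ω) (F := fun ω => S ω ∧ B ω) fun ω => and_comm] at h
    rw [div_mul_div_comm, div_eq_div_iff hS (mul_ne_zero hS hS)] at h
    rw [mul_div_assoc', eq_div_iff hS]
    exact mul_right_cancel₀ hS (by linear_combination h)
  have hnum : exIndicator P Z (fun ω => S ω ∧ B ω)
      = exIndicator P Z S * (pr P (fun ω => S ω ∧ B ω) / pr P S) := by
    simp only [exIndicator_eq_sum_values P Z, hfactor, sum_mul, mul_assoc]
  rw [cex_eq_exIndicator_div, hnum, cex_eq_exIndicator_div]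
  field_simp

lemma exIndicator_inter_eq_pr_mul_cex_of_condIndep (Z : Ω → ℝ) {S B B' : Ω → Prop}
    (hCI : ∀ y, cpr P (fun ω => Z ω = y ∧ B ω) S = cpr P (fun ω => Z ω = y) S * cpr P B S)
    (hCI' : ∀ y, cpr P (fun ω => Z ω = y ∧ B' ω) S = cpr P (fun ω => Z ω = y) S * cpr P B' S)
    (hS : pr P S ≠ 0) (hSB : pr P (fun ω => S ω ∧ B ω) ≠ 0)
    (hSB' : pr P (fun ω => S ω ∧ B' ω) ≠ 0) :
    exIndicator P Z (fun ω => S ω ∧ B ω)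
      = pr P (fun ω => S ω ∧ B ω) * cex P Z (fun ω => S ω ∧ B' ω) := by
  rw [exIndicator_eq_pr_mul_cex P Z hSB, cex_inter_eq_of_condIndep P Z hCI hS hSB,
    cex_inter_eq_of_condIndep P Z hCI' hS hSB']

end

theorem transport_full_covariates_general
    {𝒳 𝒲 : Type*} [Fintype Ω] [Fintype 𝒳] [Fintype 𝒲]
    (P : Ω → ℝ) (hP0 : ∀ ω, 0 ≤ P ω)
    (X : Ω → 𝒳) (W : Ω → 𝒲) (Ya : Ω → ℝ) (R : Ω → Bool)
    -- conditional independence of Ya and R given (X, W)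
    (hCI : ∀ x w (r : Bool) (y : ℝ), 0 < pr P (fun ω => X ω = x ∧ W ω = w) →
      cpr P (fun ω => Ya ω = y ∧ R ω = r) (fun ω => X ω = x ∧ W ω = w)
        = cpr P (fun ω => Ya ω = y) (fun ω => X ω = x ∧ W ω = w)
          * cpr P (fun ω => R ω = r) (fun ω => X ω = x ∧ W ω = w))
    -- positivity
    (hpos : ∀ x w, 0 < pr P (fun ω => X ω = x ∧ W ω = w ∧ R ω = false) →
      0 < pr P (fun ω => X ω = x ∧ W ω = w ∧ R ω = true)) :
    cex P Ya (fun ω => R ω = false)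
      = ∑ xw ∈ Finset.univ.filter
            (fun xw : 𝒳 × 𝒲 =>
              0 < pr P (fun ω => X ω = xw.1 ∧ W ω = xw.2 ∧ R ω = false)),
          cpr P (fun ω => X ω = xw.1 ∧ W ω = xw.2) (fun ω => R ω = false)
            * cex P Ya (fun ω => X ω = xw.1 ∧ W ω = xw.2 ∧ R ω = true) := by
  have hstratum : ∀ x w, 0 < pr P (fun ω => X ω = x ∧ W ω = w ∧ R ω = false) →
      exIndicator P Ya (fun ω => X ω = x ∧ W ω = w ∧ R ω = false)
        = pr P (fun ω => X ω = x ∧ W ω = w ∧ R ω = false)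
          * cex P Ya (fun ω => X ω = x ∧ W ω = w ∧ R ω = true) := by
    intro x w hF
    have hT := hpos x w hF
    have hS : 0 < pr P (fun ω => X ω = x ∧ W ω = w) :=
      hT.trans_le (pr_mono P hP0 fun ω h => ⟨h.1, h.2.1⟩)
    simpa only [and_assoc] using exIndicator_inter_eq_pr_mul_cex_of_condIndep P Ya
      (hCI x w false · hS) (hCI x w true · hS) hS.ne'
      (by simpa only [and_assoc] using hF.ne') (by simpa only [and_assoc] using hT.ne')
  rw [cex_eq_exIndicator_div,
    exIndicator_eq_sum_fiberwise P (fun ω => (X ω, W ω)) (fun ω => mem_univ _)]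
  simp only [Prod.ext_iff, and_assoc]
  rw [sum_div, ← sum_filter_of_ne (p := fun xw : 𝒳 × 𝒲 =>
      0 < pr P (fun ω => X ω = xw.1 ∧ W ω = xw.2 ∧ R ω = false))]
  · refine sum_congr rfl fun xw hxw => ?_
    rw [hstratum xw.1 xw.2 (mem_filter.1 hxw).2, cpr]
    simp only [and_assoc]
    ring
  · intro xw _ hne
    refine (pr_nonneg P hP0 _).lt_of_ne' fun hzero => hne ?_
    rw [exIndicator_eq_zero_of_pr_eq_zero P hP0 Ya hzero, zero_div]

/-- Conditional independence of the potential outcome and the source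
indicator given the full covariates gives the standardization identity. -/
theorem transport_full_covariates
    {𝒳 𝒲 : Type*} [Fintype Ω] [Fintype 𝒳] [Fintype 𝒲]
    (P : Ω → ℝ) (hP0 : ∀ ω, 0 ≤ P ω) (hP1 : ∑ ω, P ω = 1)
    (X : Ω → 𝒳) (W : Ω → 𝒲) (Ya : Ω → ℝ) (R : Ω → Bool)
    -- conditional independence of Ya and R given (X, W)
    (hCI : ∀ x w (r : Bool) (y : ℝ), 0 < pr P (fun ω => X ω = x ∧ W ω = w) →
      cpr P (fun ω => Ya ω = y ∧ R ω = r) (fun ω => X ω = x ∧ W ω = w)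
        = cpr P (fun ω => Ya ω = y) (fun ω => X ω = x ∧ W ω = w)
          * cpr P (fun ω => R ω = r) (fun ω => X ω = x ∧ W ω = w))
    -- positivity
    (hposT : 0 < pr P (fun ω => R ω = false))
    (hpos : ∀ x w, 0 < pr P (fun ω => X ω = x ∧ W ω = w ∧ R ω = false) →
      0 < pr P (fun ω => X ω = x ∧ W ω = w ∧ R ω = true)) :
    cex P Ya (fun ω => R ω = false)
      = ∑ xw ∈ Finset.univ.filter
            (fun xw : 𝒳 × 𝒲 =>
              0 < pr P (fun ω => X ω = xw.1 ∧ W ω = xw.2 ∧ R ω = false)),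
          cpr P (fun ω => X ω = xw.1 ∧ W ω = xw.2) (fun ω => R ω = false)
            * cex P Ya (fun ω => X ω = xw.1 ∧ W ω = xw.2 ∧ R ω = true) :=
  transport_full_covariates_general P hP0 X W Ya R hCI hpos
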